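/- (Theorem 2, non-ergodic convergence rate) Suppose the tolerance sequence {η_k} is positive, nonincreasing, and summable, and suppose √(η_{k+1}/η_k) ≥ (k−2)/k for all k ≥ k₀, where k₀ ≥ 4 is an integer such that δ_k ≤ 1/(2θ) and η_k ≤ 1/(24θ) for all k ≥ k₀. Then for all k ≥ k₀: δ_k ≤ τ₁/k + τ₂√(η_k), where τ₁ := k₀/(4θ) and τ₂ := 1/(4θ√(η_{k₀})). -/

import Mathlib

/-!
Approximate optimality of `x^{k+1}` makes `A x^{k+1} - b` an `η_k`-supergradient of the dual
function at `λ^k`, and the multiplier update is an approximate proximal ascent step: the dual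
value grows by at least `β/2 ‖A x^{k+1} - b‖² - η_k`, and `‖λ^k - λ*‖ ≤ B` for every `k`. With
Cauchy–Schwarz this gives the gap recursion `δ_{k+1} ≤ δ_k + η_k - 2θ max(δ_k - η_k, 0)²`.
After rescaling to `D = 4θδ`, `e = 4θη`, `r_k = √(η_k / η_{k₀})`, the bound `D_k ≤ k₀/k + r_k`
propagates by induction: while the bound is at most `1 + e_k`, the map
`t ↦ t + e - max(t - e, 0)²/2` is monotone below it; beyond that, its global maximum `2e + 1/2`
is already small enough.
-/

open RealInnerProductSpace

variable {E F : Type*} [NormedAddCommGroup E] [InnerProductSpace ℝ E]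
  [NormedAddCommGroup F] [InnerProductSpace ℝ F]

theorem ConvexOn.add_inner_gradient_le [CompleteSpace E] {f : E → ℝ}
    (hf : ConvexOn ℝ Set.univ f) {x G : E} (hG : HasGradientAt f G x) (y : E) :
    f x + ⟪G, y - x⟫ ≤ f y := by
  have hline : ConvexOn ℝ Set.univ (f ∘ AffineMap.lineMap (k := ℝ) x y) := hf.comp_affineMap _
  have hderiv : HasDerivAt (f ∘ AffineMap.lineMap (k := ℝ) x y) ⟪G, y - x⟫ 0 := by
    have hG' : HasFDerivAt f (InnerProductSpace.toDual ℝ E G)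
        (AffineMap.lineMap (k := ℝ) x y 0) := by
      simpa using hG.hasFDerivAt
    simpa using hG'.comp_hasDerivAt (0 : ℝ) AffineMap.hasDerivAt_lineMap
  have := hline.le_slope_of_hasDerivAt (Set.mem_univ 0) (Set.mem_univ 1) zero_lt_one hderiv
  simp only [slope_def_field, Function.comp_apply, AffineMap.lineMap_apply_one,
    AffineMap.lineMap_apply_zero, sub_zero, div_one] at this
  linarith

variable {f g : E → ℝ} {f' : E → E} {A : E →L[ℝ] F} {b : F} {β η : ℝ} {x : E} {μ : F}

noncomputable def lagrangian (f g : E → ℝ) (A : E →L[ℝ] F) (b : F) (x : E) (μ : F) : ℝ :=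
  f x + ⟪μ, A x - b⟫ + g x

noncomputable def augLagrangian (f g : E → ℝ) (A : E →L[ℝ] F) (b : F) (β : ℝ) (x : E) (μ : F) :
    ℝ :=
  lagrangian f g A b x μ + β / 2 * ‖A x - b‖ ^ 2

theorem lagrangian_eq_add_inner (x : E) (μ ν : F) :
    lagrangian f g A b x ν = lagrangian f g A b x μ + ⟪ν - μ, A x - b⟫ := by
  simp only [lagrangian, inner_sub_left]; ring

theorem augLagrangian_eq_add_inner (β : ℝ) (x : E) (μ ν : F) :
    augLagrangian f g A b β x ν = augLagrangian f g A b β x μ + ⟪ν - μ, A x - b⟫ := by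
  simp only [augLagrangian, lagrangian_eq_add_inner x μ ν]; ring

variable [CompleteSpace E] [CompleteSpace F]

def IsApproxALSolution (f' : E → E) (g : E → ℝ) (A : E →L[ℝ] F) (b : F) (β η : ℝ) (μ : F)
    (x : E) : Prop :=
  ∀ y, ⟪f' x + A.adjoint (μ + β • (A x - b)), x - y⟫ + g x - g y ≤ η

namespace IsApproxALSolution

-- The gradient of the augmented Lagrangian at multiplier `μ` is that of the plain Lagrangian at
-- the updated multiplier `μ + β • (A x - b)`.
theorem lagrangian_le (hf : ConvexOn ℝ Set.univ f) (hf' : HasGradientAt f (f' x) x)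
    (hx : IsApproxALSolution f' g A b β η μ x) (y : E) :
    lagrangian f g A b x (μ + β • (A x - b)) ≤ lagrangian f g A b y (μ + β • (A x - b)) + η := by
  have hlin := hx y
  have hconv := hf.add_inner_gradient_le hf' y
  set ν := μ + β • (A x - b)
  simp only [lagrangian, inner_add_left, ContinuousLinearMap.adjoint_inner_left,
    inner_sub_right] at hlin hconv ⊢
  linarith

theorem augLagrangian_le (hf : ConvexOn ℝ Set.univ f) (hf' : HasGradientAt f (f' x) x)
    (hβ : 0 ≤ β) (hx : IsApproxALSolution f' g A b β η μ x) (y : E) :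
    augLagrangian f g A b β x μ ≤ augLagrangian f g A b β y μ + η := by
  have hℓ := hx.lagrangian_le hf hf' y
  rw [lagrangian_eq_add_inner x μ, lagrangian_eq_add_inner y μ, add_sub_cancel_left,
    real_inner_smul_left, real_inner_smul_left, real_inner_self_eq_norm_sq] at hℓ
  -- the quadratic penalty is convex: `‖r‖² - ‖s‖² ≤ 2⟪r, r - s⟫`
  have hsq := norm_sub_sq_real (A x - b) (A y - b)
  have hpen : 0 ≤ β * ‖(A x - b) - (A y - b)‖ ^ 2 := by positivity
  simp only [augLagrangian]
  nlinarith

end IsApproxALSolution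

section Dual

variable {d : F → ℝ} (hd : ∀ μ, IsLeast (Set.range fun x => augLagrangian f g A b β x μ) (d μ))
  (hf : ConvexOn ℝ Set.univ f) (hf' : HasGradientAt f (f' x) x)
  (hx : IsApproxALSolution f' g A b β η μ x) (hβ : 0 ≤ β)
include hd hf hf' hx hβ

theorem augLagrangian_le_dual_add : augLagrangian f g A b β x μ ≤ d μ + η := by
  obtain ⟨z, hz⟩ := (hd μ).1
  exact hz ▸ hx.augLagrangian_le hf hf' hβ z

theorem lagrangian_le_dual_add :
    lagrangian f g A b x (μ + β • (A x - b)) ≤ d (μ + β • (A x - b)) + η := by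
  obtain ⟨z, hz⟩ := (hd (μ + β • (A x - b))).1
  have hβz : 0 ≤ β / 2 * ‖A z - b‖ ^ 2 := by positivity
  have := hx.lagrangian_le hf hf' z
  simp only [augLagrangian] at hz
  linarith

theorem dual_le_dual_add_inner (ν : F) : d ν ≤ d μ + ⟪ν - μ, A x - b⟫ + η := by
  have hν : d ν ≤ augLagrangian f g A b β x ν := (hd ν).2 ⟨x, rfl⟩
  rw [augLagrangian_eq_add_inner β x μ] at hν
  linarith [augLagrangian_le_dual_add hd hf hf' hx hβ]

theorem dual_add_sq_norm_le :
    d μ + β / 2 * ‖A x - b‖ ^ 2 - η ≤ d (μ + β • (A x - b)) := by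
  have hμ : d μ ≤ augLagrangian f g A b β x μ := (hd μ).2 ⟨x, rfl⟩
  have hstep := lagrangian_le_dual_add hd hf hf' hx hβ
  rw [lagrangian_eq_add_inner x μ, add_sub_cancel_left, real_inner_smul_left,
    real_inner_self_eq_norm_sq] at hstep
  simp only [augLagrangian] at hμ
  linarith

theorem norm_sub_sq_le_of_dual_le {ν : F} (hν : d (μ + β • (A x - b)) ≤ d ν) :
    ‖μ + β • (A x - b) - ν‖ ^ 2 ≤ ‖μ - ν‖ ^ 2 + 2 * β * η := by
  have hν' : d ν ≤ augLagrangian f g A b β x ν := (hd ν).2 ⟨x, rfl⟩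
  have hstep := lagrangian_le_dual_add hd hf hf' hx hβ
  rw [augLagrangian, lagrangian_eq_add_inner x (μ + β • (A x - b))] at hν'
  have hinner : ⟪μ + β • (A x - b) - ν, A x - b⟫ ≤ β / 2 * ‖A x - b‖ ^ 2 + η := by
    rw [← neg_sub, inner_neg_left]; linarith
  have hexp : ‖μ + β • (A x - b) - ν‖ ^ 2
      = ‖μ - ν‖ ^ 2 + 2 * β * ⟪μ + β • (A x - b) - ν, A x - b⟫ - β ^ 2 * ‖A x - b‖ ^ 2 := by
    rw [show μ + β • (A x - b) - ν = (μ - ν) + β • (A x - b) by abel, norm_add_sq_real,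
      inner_add_left, real_inner_smul_left, real_inner_smul_right, norm_smul,
      real_inner_self_eq_norm_sq, Real.norm_eq_abs, mul_pow, sq_abs]
    ring
  nlinarith

theorem dual_gap_succ_le {ν : F} {B θ : ℝ} (hB : ‖μ - ν‖ ≤ B) (hθ : 0 ≤ θ)
    (hθB : 4 * θ * B ^ 2 ≤ β) :
    d ν - d (μ + β • (A x - b)) ≤ d ν - d μ + η - 2 * θ * max (d ν - d μ - η) 0 ^ 2 := by
  have hascent := dual_add_sq_norm_le hd hf hf' hx hβ
  have hgap : max (d ν - d μ - η) 0 ≤ B * ‖A x - b‖ := by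
    refine max_le ?_ (mul_nonneg ((norm_nonneg _).trans hB) (norm_nonneg _))
    have := dual_le_dual_add_inner hd hf hf' hx hβ ν
    calc d ν - d μ - η ≤ ⟪ν - μ, A x - b⟫ := by linarith
      _ ≤ ‖ν - μ‖ * ‖A x - b‖ := real_inner_le_norm _ _
      _ ≤ B * ‖A x - b‖ := by rw [norm_sub_rev]; gcongr
  have hpenalty : 2 * θ * max (d ν - d μ - η) 0 ^ 2 ≤ β / 2 * ‖A x - b‖ ^ 2 := by
    calc 2 * θ * max (d ν - d μ - η) 0 ^ 2 ≤ 2 * θ * (B * ‖A x - b‖) ^ 2 := by gcongr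
      _ = 4 * θ * B ^ 2 / 2 * ‖A x - b‖ ^ 2 := by ring
      _ ≤ β / 2 * ‖A x - b‖ ^ 2 := by gcongr
  linarith

end Dual

theorem norm_sub_sq_le_tsum {d : F → ℝ} {x : ℕ → E} {lam : ℕ → F} {η : ℕ → ℝ} {ν : F}
    (hd : ∀ μ, IsLeast (Set.range fun x => augLagrangian f g A b β x μ) (d μ))
    (hf : ConvexOn ℝ Set.univ f) (hf' : ∀ x, HasGradientAt f (f' x) x) (hβ : 0 ≤ β)
    (happrox : ∀ k, 1 ≤ k → IsApproxALSolution f' g A b β (η k) (lam k) (x (k + 1)))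
    (hlam : ∀ k, 1 ≤ k → lam (k + 1) = lam k + β • (A (x (k + 1)) - b))
    (hν : ∀ μ, d μ ≤ d ν) (hη : ∀ k, 1 ≤ k → 0 ≤ η k) (hsum : Summable fun k => η (k + 1))
    (k : ℕ) (hk : 1 ≤ k) :
    ‖lam k - ν‖ ^ 2 ≤ ‖lam 1 - ν‖ ^ 2 + 2 * β * ∑' k, η (k + 1) := by
  obtain ⟨j, rfl⟩ := Nat.exists_eq_add_of_le' hk
  have hstep : ∀ i ∈ Finset.range j,
      ‖lam (i + 1 + 1) - ν‖ ^ 2 - ‖lam (i + 1) - ν‖ ^ 2 ≤ 2 * β * η (i + 1) := by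
    intro i _
    rw [hlam (i + 1) (by omega)]
    linarith [norm_sub_sq_le_of_dual_le hd hf (hf' _) (happrox (i + 1) (by omega)) hβ (hν _)]
  have htelescope := Finset.sum_le_sum hstep
  rw [Finset.sum_range_sub (fun i => ‖lam (i + 1) - ν‖ ^ 2), ← Finset.mul_sum] at htelescope
  have htsum := hsum.sum_le_tsum (Finset.range j) (fun i _ => hη (i + 1) (by omega))
  nlinarith

theorem add_sub_max_sq_le_of_le {t e ψ : ℝ} (ht : t ≤ ψ) (heψ : e ≤ ψ) (hψ : ψ ≤ 1 + e) :
    t + e - max (t - e) 0 ^ 2 / 2 ≤ ψ + e - (ψ - e) ^ 2 / 2 := by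
  rcases le_total t e with hte | hte
  · rw [max_eq_right (by linarith)]; nlinarith
  · rw [max_eq_left (by linarith)]; nlinarith

theorem add_sub_max_sq_le (t e : ℝ) : t + e - max (t - e) 0 ^ 2 / 2 ≤ 2 * e + 1 / 2 := by
  rcases le_total t e with hte | hte
  · rw [max_eq_right (by linarith)]; linarith
  · rw [max_eq_left (by linarith)]; nlinarith [sq_nonneg (t - e - 1)]

theorem add_sub_sq_half_le_next_rate {k₀ K r e : ℝ} (hk₀ : 4 ≤ k₀) (hK : k₀ ≤ K) (hr : 0 ≤ r)
    (hr1 : r ≤ 1) (her : 6 * e ≤ r ^ 2) :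
    k₀ / K + r + e - (k₀ / K + r - e) ^ 2 / 2 ≤ k₀ / (K + 1) + r * (K - 2) / K := by
  have hK0 : 0 < K := by linarith
  have hsplit : k₀ / (K + 1) + r * (K - 2) / K
      = k₀ / K + r - (k₀ / (K * (K + 1)) + 2 * r / K) := by
    field_simp; ring
  have hk₀_loss : 2 * (k₀ / (K * (K + 1))) ≤ (k₀ / K) ^ 2 := by
    rw [div_pow, mul_div_assoc', div_le_div_iff₀ (by positivity) (by positivity)]
    nlinarith [mul_nonneg (mul_nonneg (by linarith : (0:ℝ) ≤ k₀) hK0.le)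
      (by nlinarith : (0:ℝ) ≤ k₀ * (K + 1) - 2 * K)]
  have hr_loss : 2 * r / K ≤ k₀ / K * (5 * r / 6) := by
    rw [div_mul_eq_mul_div, div_le_div_iff_of_pos_right hK0]; nlinarith
  have hsq : (k₀ / K + 5 * r / 6) ^ 2 ≤ (k₀ / K + r - e) ^ 2 := by
    have : 0 ≤ k₀ / K := by positivity
    gcongr
    nlinarith
  nlinarith

theorem two_mul_add_half_le_next_rate {k₀ K r e : ℝ} (hk₀ : 4 ≤ k₀) (hK : k₀ ≤ K) (hr : 0 ≤ r)
    (hr1 : r ≤ 1) (her : 6 * e ≤ r ^ 2) (hψ : 1 ≤ k₀ / K + r) :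
    2 * e + 1 / 2 ≤ k₀ / (K + 1) + r * (K - 2) / K := by
  have hK0 : 0 < K := by linarith
  have hrK : K - k₀ ≤ r * K := by
    have := mul_le_mul_of_nonneg_right hψ hK0.le
    rw [add_mul, div_mul_cancel₀ _ hK0.ne'] at this
    linarith
  have hdiff : k₀ / (K + 1) + r * (K - 2) / K - (r ^ 2 / 3 + 1 / 2)
      = (6 * k₀ * K + 6 * r * (K - 2) * (K + 1) - 2 * r ^ 2 * K * (K + 1) - 3 * K * (K + 1))
        / (6 * K * (K + 1)) := by
    field_simp; ring
  have hnum : 0 ≤ 6 * k₀ * K + 6 * r * (K - 2) * (K + 1) - 2 * r ^ 2 * K * (K + 1)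
      - 3 * K * (K + 1) := by
    nlinarith [mul_le_mul_of_nonneg_right hrK (by linarith : (0:ℝ) ≤ K - 2),
      mul_nonneg (mul_nonneg hr (sub_nonneg.2 hr1)) hK0.le]
  have : 0 ≤ k₀ / (K + 1) + r * (K - 2) / K - (r ^ 2 / 3 + 1 / 2) := by
    rw [hdiff]; positivity
  linarith

theorem le_next_rate {k₀ K r r' e D D' : ℝ} (hk₀ : 4 ≤ k₀) (hK : k₀ ≤ K) (hr : 0 ≤ r)
    (hr1 : r ≤ 1) (he : 0 ≤ e) (her : 6 * e ≤ r ^ 2) (hr' : r * (K - 2) / K ≤ r')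
    (hD : D ≤ k₀ / K + r) (hD' : D' ≤ D + e - max (D - e) 0 ^ 2 / 2) :
    D' ≤ k₀ / (K + 1) + r' := by
  suffices D + e - max (D - e) 0 ^ 2 / 2 ≤ k₀ / (K + 1) + r * (K - 2) / K by linarith
  rcases le_total (k₀ / K + r) (1 + e) with hψ | hψ
  · have heψ : e ≤ k₀ / K + r := by
      have : 0 ≤ k₀ / K := div_nonneg (by linarith) (by linarith)
      nlinarith
    exact (add_sub_max_sq_le_of_le hD heψ hψ).trans
      (add_sub_sq_half_le_next_rate hk₀ hK hr hr1 her)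
  · exact (add_sub_max_sq_le D e).trans
      (two_mul_add_half_le_next_rate hk₀ hK hr hr1 her (by linarith))

theorem le_rate_of_recursion {D e r : ℕ → ℝ} {k₀ : ℕ} (hk₀ : 4 ≤ k₀)
    (hbase : D k₀ ≤ 1 + r k₀) (hr : ∀ k, k₀ ≤ k → 0 ≤ r k) (hr1 : ∀ k, k₀ ≤ k → r k ≤ 1)
    (he : ∀ k, k₀ ≤ k → 0 ≤ e k)    (her : ∀ k, k₀ ≤ k → 6 * e k ≤ r k ^ 2)
    (hratio : ∀ k, k₀ ≤ k → r k * (k - 2) / k ≤ r (k + 1))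
    (hrec : ∀ k, k₀ ≤ k → D (k + 1) ≤ D k + e k - max (D k - e k) 0 ^ 2 / 2) :
    ∀ k, k₀ ≤ k → D k ≤ k₀ / k + r k := by
  intro k hk
  induction k, hk using Nat.le_induction with
  | base => rwa [div_self (by positivity)]
  | succ k hk ih =>
    push_cast
    exact le_next_rate (by exact_mod_cast hk₀) (by exact_mod_cast hk) (hr k hk) (hr1 k hk)
      (he k hk) (her k hk) (hratio k hk) ih (hrec k hk)

theorem four_mul_le_add_sub_max_sq {θ t t' e : ℝ} (hθ : 0 ≤ θ)
    (h : t' ≤ t + e - 2 * θ * max (t - e) 0 ^ 2) :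
    4 * θ * t' ≤ 4 * θ * t + 4 * θ * e - max (4 * θ * t - 4 * θ * e) 0 ^ 2 / 2 := by
  rw [← mul_sub, ← mul_zero (4 * θ), ← mul_max_of_nonneg _ _ (by positivity)]
  linear_combination 4 * θ * h

theorem dual_gap_le_rate {δ η : ℕ → ℝ} {θ : ℝ} {k₀ : ℕ} (hk₀ : 4 ≤ k₀)
    (hηpos : ∀ k, k₀ ≤ k → 0 < η k) (hηmono : ∀ k, k₀ ≤ k → η (k + 1) ≤ η k)
    (hδk₀ : δ k₀ ≤ 1 / (2 * θ)) (hηk₀ : η k₀ ≤ 1 / (24 * θ))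
    (hratio : ∀ k, k₀ ≤ k → ((k : ℝ) - 2) / k ≤ √(η (k + 1) / η k))
    (hrec : ∀ k, k₀ ≤ k → δ (k + 1) ≤ δ k + η k - 2 * θ * max (δ k - η k) 0 ^ 2) :
    ∀ k, k₀ ≤ k → δ k ≤ k₀ / (4 * θ) / k + 1 / (4 * θ * √(η k₀)) * √(η k) := by
  have hη₀ := hηpos k₀ le_rfl
  have hθ : 0 < θ := by
    by_contra! hθ
    linarith [div_nonpos_of_nonneg_of_nonpos zero_le_one (by linarith : 24 * θ ≤ 0)]
  have hs₀ : 0 < √(η k₀) := Real.sqrt_pos.2 hη₀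
  have hbase : 4 * θ * δ k₀ ≤ 1 + √(η k₀) / √(η k₀) := by
    rw [div_self hs₀.ne']
    rw [le_div_iff₀ (by positivity)] at hδk₀
    linarith
  have hr1 : ∀ k, k₀ ≤ k → √(η k) / √(η k₀) ≤ 1 := fun k hk =>
    (div_le_one hs₀).2 <| Real.sqrt_le_sqrt <|
      antitoneOn_nat_Ici_of_succ_le hηmono (Set.mem_ofPred.2 le_rfl) hk hk
  have her : ∀ k, k₀ ≤ k → 6 * (4 * θ * η k) ≤ (√(η k) / √(η k₀)) ^ 2 := by
    intro k hk
    have hηk := hηpos k hk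
    rw [le_div_iff₀' (by positivity)] at hηk₀
    rw [div_pow, Real.sq_sqrt hηk.le, Real.sq_sqrt hη₀.le, le_div_iff₀ hη₀]
    nlinarith
  have hratio' : ∀ k, k₀ ≤ k → √(η k) / √(η k₀) * (k - 2) / k ≤ √(η (k + 1)) / √(η k₀) := by
    intro k hk
    have h := hratio k hk
    rw [Real.sqrt_div' _ (hηpos k hk).le, le_div_iff₀ (Real.sqrt_pos.2 (hηpos k hk))] at h
    calc √(η k) / √(η k₀) * (k - 2) / k = (k - 2) / k * √(η k) / √(η k₀) := by ring
      _ ≤ √(η (k + 1)) / √(η k₀) := by gcongr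
  intro k hk
  have := le_rate_of_recursion (D := fun k => 4 * θ * δ k) (e := fun k => 4 * θ * η k) hk₀
    hbase (fun k _ => by positivity) hr1 (fun k hk => (mul_pos (by positivity) (hηpos k hk)).le)
    her hratio' (fun k hk => four_mul_le_add_sub_max_sq hθ.le (hrec k hk)) k hk
  rw [show k₀ / (4 * θ) / k + 1 / (4 * θ * √(η k₀)) * √(η k)
      = (k₀ / k + √(η k) / √(η k₀)) / (4 * θ) by field_simp, le_div_iff₀' (by positivity)]
  exact this

theorem ial_nonergodic_rate_general
    {n m : ℕ}
    (A : EuclideanSpace ℝ (Fin n) →L[ℝ] EuclideanSpace ℝ (Fin m))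
    (b : EuclideanSpace ℝ (Fin m))
    (f g : EuclideanSpace ℝ (Fin n) → ℝ)
    (f' : EuclideanSpace ℝ (Fin n) → EuclideanSpace ℝ (Fin n))
    (hf : ConvexOn ℝ Set.univ f)
    (hf' : ∀ x, HasGradientAt f (f' x) x)
    (β : ℝ) (hβ : 0 < β)
    (L : EuclideanSpace ℝ (Fin n) → EuclideanSpace ℝ (Fin m) → ℝ)
    (hL : ∀ x lam, L x lam
        = f x + ⟪lam, A x - b⟫ + β / 2 * ‖A x - b‖ ^ 2 + g x)
    (d : EuclideanSpace ℝ (Fin m) → ℝ)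
    (hd : ∀ lam, IsLeast (Set.range fun x => L x lam) (d lam))
    (x : ℕ → EuclideanSpace ℝ (Fin n))
    (lam : ℕ → EuclideanSpace ℝ (Fin m))
    (η : ℕ → ℝ)
    (hηpos : ∀ k, 1 ≤ k → 0 < η k)
    (hηmono : ∀ k, 1 ≤ k → η (k + 1) ≤ η k)
    (hsum : Summable fun k : ℕ => η (k + 1))
    (happrox : ∀ k, 1 ≤ k → ∀ y,
        ⟪f' (x (k + 1)) + A.adjoint (lam k + β • (A (x (k + 1)) - b)), x (k + 1) - y⟫
          + g (x (k + 1)) - g y ≤ η k)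
    (hlam : ∀ k, 1 ≤ k → lam (k + 1) = lam k + β • (A (x (k + 1)) - b))
    (lamstar : EuclideanSpace ℝ (Fin m))
    (hstar : ∀ μ, d μ ≤ d lamstar)
    (δ : ℕ → ℝ)
    (hδ : ∀ k, δ k = d lamstar - d (lam k))
    (B : ℝ)
    (hB : B = Real.sqrt (‖lam 1 - lamstar‖ ^ 2 + 2 * β * ∑' k : ℕ, η (k + 1)))
    (θ : ℝ)
    (hθ : θ = β / (4 * B ^ 2))
    (k₀ : ℕ) (hk₀ : 4 ≤ k₀)
    (hδk₀ : ∀ k, k₀ ≤ k → δ k ≤ 1 / (2 * θ))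
    (hηk₀ : ∀ k, k₀ ≤ k → η k ≤ 1 / (24 * θ))
    (hratio : ∀ k, k₀ ≤ k → ((k : ℝ) - 2) / k ≤ Real.sqrt (η (k + 1) / η k))
    (τ₁ τ₂ : ℝ)
    (hτ₁ : τ₁ = k₀ / (4 * θ))
    (hτ₂ : τ₂ = 1 / (4 * θ * Real.sqrt (η k₀))) :
    ∀ k, k₀ ≤ k → δ k ≤ τ₁ / k + τ₂ * Real.sqrt (η k) := by
  obtain rfl : L = augLagrangian f g A b β := by
    funext y μ
    rw [hL, augLagrangian, lagrangian]
    ring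
  have hθ₀ : 0 ≤ θ := by rw [hθ]; positivity
  have hθB : 4 * θ * B ^ 2 ≤ β := by
    rcases eq_or_ne B 0 with hB₀ | hB₀
    · simp [hB₀, hβ.le]
    · rw [hθ]; field_simp; rfl
  have hdist : ∀ k, 1 ≤ k → ‖lam k - lamstar‖ ≤ B := fun k hk => hB ▸ Real.le_sqrt_of_sq_le
    (norm_sub_sq_le_tsum hd hf hf' hβ.le happrox hlam hstar (fun k hk => (hηpos k hk).le) hsum k hk)
  have hrec : ∀ k, k₀ ≤ k → δ (k + 1) ≤ δ k + η k - 2 * θ * max (δ k - η k) 0 ^ 2 := by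
    intro k hk
    rw [hδ, hδ, hlam k (by omega)]
    exact dual_gap_succ_le hd hf (hf' _) (happrox k (by omega)) hβ.le (hdist k (by omega)) hθ₀ hθB
  subst hτ₁ hτ₂
  exact dual_gap_le_rate hk₀ (fun k hk => hηpos k (by omega)) (fun k hk => hηmono k (by omega))
    (hδk₀ k₀ le_rfl) (hηk₀ k₀ le_rfl) hratio hrec

/-- **Theorem 2 (non-ergodic convergence rate).**
If `{η_k}` is positive, nonincreasing, summable, and `√(η_{k+1}/η_k) ≥ (k−2)/k`
for all `k ≥ k₀`, where `k₀ ≥ 4` satisfies `δ_k ≤ 1/(2θ)` and `η_k ≤ 1/(24θ)` for all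
`k ≥ k₀`, then `δ_k ≤ τ₁/k + τ₂ √(η_k)` for all `k ≥ k₀`, where `τ₁ := k₀/(4θ)` and
`τ₂ := 1/(4θ√(η_{k₀}))`. -/
theorem ial_nonergodic_rate
    {n m : ℕ}
    (A : EuclideanSpace ℝ (Fin n) →L[ℝ] EuclideanSpace ℝ (Fin m))
    (b : EuclideanSpace ℝ (Fin m))
    (f g : EuclideanSpace ℝ (Fin n) → ℝ)
    (f' : EuclideanSpace ℝ (Fin n) → EuclideanSpace ℝ (Fin n))
    (hf : ConvexOn ℝ Set.univ f)
    (hf' : ∀ x, HasGradientAt f (f' x) x)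
    (hg : ConvexOn ℝ Set.univ g)
    (β : ℝ) (hβ : 0 < β)
    (L : EuclideanSpace ℝ (Fin n) → EuclideanSpace ℝ (Fin m) → ℝ)
    (hL : ∀ x lam, L x lam
        = f x + ⟪lam, A x - b⟫ + β / 2 * ‖A x - b‖ ^ 2 + g x)
    (d : EuclideanSpace ℝ (Fin m) → ℝ)
    (hd : ∀ lam, IsLeast (Set.range fun x => L x lam) (d lam))
    (x : ℕ → EuclideanSpace ℝ (Fin n))
    (lam : ℕ → EuclideanSpace ℝ (Fin m))
    (η : ℕ → ℝ)
    (hηpos : ∀ k, 1 ≤ k → 0 < η k)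
    (hηmono : ∀ k, 1 ≤ k → η (k + 1) ≤ η k)
    (hsum : Summable fun k : ℕ => η (k + 1))
    (happrox : ∀ k, 1 ≤ k → ∀ y,
        ⟪f' (x (k + 1)) + A.adjoint (lam k + β • (A (x (k + 1)) - b)), x (k + 1) - y⟫
          + g (x (k + 1)) - g y ≤ η k)
    (hlam : ∀ k, 1 ≤ k → lam (k + 1) = lam k + β • (A (x (k + 1)) - b))
    (lamstar : EuclideanSpace ℝ (Fin m))
    (hstar : ∀ μ, d μ ≤ d lamstar)
    (δ : ℕ → ℝ)
    (hδ : ∀ k, δ k = d lamstar - d (lam k))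
    (B : ℝ)
    (hB : B = Real.sqrt (‖lam 1 - lamstar‖ ^ 2 + 2 * β * ∑' k : ℕ, η (k + 1)))
    (θ : ℝ)
    (hθ : θ = β / (4 * B ^ 2))
    (k₀ : ℕ) (hk₀ : 4 ≤ k₀)
    (hδk₀ : ∀ k, k₀ ≤ k → δ k ≤ 1 / (2 * θ))
    (hηk₀ : ∀ k, k₀ ≤ k → η k ≤ 1 / (24 * θ))
    (hratio : ∀ k, k₀ ≤ k → ((k : ℝ) - 2) / k ≤ Real.sqrt (η (k + 1) / η k))
    (τ₁ τ₂ : ℝ)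
    (hτ₁ : τ₁ = k₀ / (4 * θ))
    (hτ₂ : τ₂ = 1 / (4 * θ * Real.sqrt (η k₀))) :
    ∀ k, k₀ ≤ k → δ k ≤ τ₁ / k + τ₂ * Real.sqrt (η k) :=
  ial_nonergodic_rate_general A b f g f' hf hf' β hβ L hL d hd x lam η hηpos hηmono hsum happrox
    hlam lamstar hstar δ hδ B hB θ hθ k₀ hk₀ hδk₀ hηk₀ hratio τ₁ τ₂ hτ₁ hτ₂
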